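/- Let G_w be a weighted bicyclic graph. Then i_+(G_w) = 1 if and only if G_w is isomorphic as a weighted graph to one of the following: (i) weighted θ(1,1,1) — the complete bipartite graph K_{2,3} with parts {u,v} and {x_1,x_2,x_3} — whose weights satisfy w(ux_1)·w(x_2v) = w(ux_2)·w(x_1v) and w(ux_1)·w(x_3v) = w(ux_3)·w(x_1v); (ii) weighted θ(1,0,1) — vertices u, v, x_1, x_2 with edges uv, ux_1, x_1v, ux_2, x_2v — whose weights satisfy w(ux_1)·w(x_2v) = w(ux_2)·w(x_1v). -/

import Mathlib

open Matrix

/-- The positive inertia index of a matrix: the number of positive eigenvalues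
(counted with multiplicity) if the matrix is Hermitian, and `0` otherwise. -/
noncomputable def posInertia {k 𝕜 : Type*} [RCLike 𝕜] [Fintype k] [DecidableEq k]
    (A : Matrix k k 𝕜) : ℕ :=
  if h : A.IsHermitian then Fintype.card {i // 0 < h.eigenvalues i} else 0

/-- The negative inertia index of a matrix. -/
noncomputable def negInertia {k 𝕜 : Type*} [RCLike 𝕜] [Fintype k] [DecidableEq k]
    (A : Matrix k k 𝕜) : ℕ :=
  if h : A.IsHermitian then Fintype.card {i // h.eigenvalues i < 0} else 0

/-- The nullity of a matrix: the number of zero eigenvalues. -/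
noncomputable def nulInertia {k 𝕜 : Type*} [RCLike 𝕜] [Fintype k] [DecidableEq k]
    (A : Matrix k k 𝕜) : ℕ :=
  if h : A.IsHermitian then Fintype.card {i // h.eigenvalues i = 0} else 0

/-- A weighted graph: a simple graph together with a symmetric weight function
which is positive on all edges. -/
structure WeightedGraph (V : Type*) where
  G : SimpleGraph V
  w : V → V → ℝ
  symm : ∀ u v : V, w u v = w v u
  pos : ∀ u v : V, G.Adj u v → 0 < w u v

open Classical in
/-- The (weighted) adjacency matrix of a weighted graph. -/
noncomputable def WeightedGraph.adjMatrix {V : Type*} [Fintype V] [DecidableEq V]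
    (W : WeightedGraph V) : Matrix V V ℝ :=
  fun a b => if W.G.Adj a b then W.w a b else 0

/-- `i₊`, the number of positive eigenvalues of the adjacency matrix. -/
noncomputable def WeightedGraph.iPos {V : Type*} [Fintype V] [DecidableEq V]
    (W : WeightedGraph V) : ℕ := posInertia W.adjMatrix

/-- `i₋`, the number of negative eigenvalues of the adjacency matrix. -/
noncomputable def WeightedGraph.iNeg {V : Type*} [Fintype V] [DecidableEq V]
    (W : WeightedGraph V) : ℕ := negInertia W.adjMatrix

/-- `i₀`, the number of zero eigenvalues of the adjacency matrix. -/
noncomputable def WeightedGraph.iNul {V : Type*} [Fintype V] [DecidableEq V]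
    (W : WeightedGraph V) : ℕ := nulInertia W.adjMatrix

/-- A weighted graph is bicyclic if its underlying graph is connected and has
exactly one more edge than vertices. -/
def WeightedGraph.IsBicyclic {V : Type*} [Fintype V] (W : WeightedGraph V) : Prop :=
  W.G.Connected ∧ W.G.edgeSet.ncard = Fintype.card V + 1

/-- The graph has a pendant vertex (a vertex of degree one). -/
def WeightedGraph.HasPendant {V : Type*} (W : WeightedGraph V) : Prop :=
  ∃ x : V, (W.G.neighborSet x).ncard = 1

/-- The graph has no pendant vertices. -/
def WeightedGraph.NoPendant {V : Type*} (W : WeightedGraph V) : Prop :=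
  ∀ x : V, (W.G.neighborSet x).ncard ≠ 1

/-- The base of `G` is (isomorphic to) `H`: some induced subgraph of `G` is
isomorphic to `H`.  (For a bicyclic graph `G` and a bicyclic graph `H` without
pendant vertices this induced subgraph is necessarily the unique base of `G`.) -/
def BaseIsoTo {V B : Type*} (G : SimpleGraph V) (H : SimpleGraph B) : Prop :=
  ∃ S : Set V, Nonempty ((G.induce S) ≃g H)

/-- Vertex labels of the connecting path of `∞(p,l,q)`: the path starts at the
vertex `0` of the first cycle `0, 1, …, p-1`, and its further vertices are
`p, p+1, …`. -/
def pathVert (p j : ℕ) : ℕ := if j = 0 then 0 else p - 1 + j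

/-- Vertex labels of the second cycle of `∞(p,l,q)`: it starts at the last
vertex of the connecting path and continues with `p+l-1, p+l, …`. -/
def infCyc2Vert (p l k : ℕ) : ℕ := if k = 0 then pathVert p (l - 1) else p + l - 2 + k

/-- The edge relation of `∞(p,l,q)` on the vertex labels `0, …, p+q+l-3`:
the first cycle on `0, …, p-1`, the connecting path (on `l` vertices) from the
vertex `0`, and the second cycle attached at the last path vertex. -/
def infinityRel (p l q a b : ℕ) : Prop :=
  (a + 1 < p ∧ b = a + 1) ∨ (a = 0 ∧ b = p - 1) ∨
  (∃ j, j + 1 < l ∧ a = pathVert p j ∧ b = pathVert p (j + 1)) ∨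
  (∃ k, k + 1 < q ∧ a = infCyc2Vert p l k ∧ b = infCyc2Vert p l (k + 1)) ∨
  (a = infCyc2Vert p l 0 ∧ b = infCyc2Vert p l (q - 1))

/-- The graph `∞(p,l,q)`: two vertex-disjoint cycles of lengths `p` and `q`
joined by a path on `l` vertices (whose endpoints are identified with one
vertex on each cycle).  It has `p + q + l - 2` vertices. -/
def infinityGraph (p l q : ℕ) : SimpleGraph (Fin (p + q + l - 2)) :=
  SimpleGraph.fromRel (fun a b => infinityRel p l q a.1 b.1)

/-- The edge relation of one of the three `u,v`-paths of `θ(p,l,q)` having `m`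
internal vertices, the internal vertices being labelled `o, o+1, …, o+m-1`
(`u` is the vertex `0` and `v` is the vertex `1`). -/
def thetaPathRel (m o a b : ℕ) : Prop :=
  if m = 0 then a = 0 ∧ b = 1
  else (a = 0 ∧ b = o) ∨ (∃ i, i + 1 < m ∧ a = o + i ∧ b = o + i + 1) ∨ (a = o + m - 1 ∧ b = 1)

/-- The graph `θ(p,l,q)`: two vertices `u = 0` and `v = 1` joined by three
internally disjoint paths with `p`, `l`, `q` internal vertices respectively.
It has `p + l + q + 2` vertices. -/
def thetaGraph (p l q : ℕ) : SimpleGraph (Fin (p + l + q + 2)) :=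
  SimpleGraph.fromRel (fun a b =>
    thetaPathRel p 2 a.1 b.1 ∨ thetaPathRel l (p + 2) a.1 b.1 ∨
      thetaPathRel q (p + l + 2) a.1 b.1)

/-- The edge set of `G` is exactly the (symmetrized) list `E`. -/
def adjSpec {V : Type*} (G : SimpleGraph V) (E : List (V × V)) : Prop :=
  ∀ a b : V, G.Adj a b ↔ ((a, b) ∈ E ∨ (b, a) ∈ E)

/-- The weighted subgraph induced on a set `S` of vertices. -/
def WeightedGraph.induce {V : Type*} (W : WeightedGraph V) (S : Set V) : WeightedGraph S where
  G := W.G.induce S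
  w := fun a b => W.w a b
  symm := fun a b => W.symm a b
  pos := fun a b h => W.pos a b h

/-- The `k`-th vertex (mod `n`) of a cycle on `Fin n`. -/
def cycVert (n : ℕ) (hn : 0 < n) (k : ℕ) : Fin n := ⟨k % n, Nat.mod_lt _ hn⟩

/-- `W` is the weighted graph `θ(1,1,1)` (i.e. `K_{2,3}`) with parts `{u, v}`
and `{x1, x2, x3}`. -/
def Theta111Shape {V : Type*} (W : WeightedGraph V) (u v x1 x2 x3 : V) : Prop :=
  [u, v, x1, x2, x3].Nodup ∧ (∀ z : V, z ∈ [u, v, x1, x2, x3]) ∧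
    adjSpec W.G [(u, x1), (u, x2), (u, x3), (x1, v), (x2, v), (x3, v)]

/-- `W` is the weighted graph `θ(1,0,1)` on vertices `u, v, x1, x2` with edges
`uv, ux1, x1v, ux2, x2v`. -/
def Theta101Shape {V : Type*} (W : WeightedGraph V) (u v x1 x2 : V) : Prop :=
  [u, v, x1, x2].Nodup ∧ (∀ z : V, z ∈ [u, v, x1, x2]) ∧
    adjSpec W.G [(u, v), (u, x1), (x1, v), (u, x2), (x2, v)]

/-- `W` is the weighted graph `θ(1,0,2)` on vertices `u, v, x, y, z` with edges
`uv, ux, xv, uy, yz, zv`. -/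
def Theta102Shape {V : Type*} (W : WeightedGraph V) (u v x y z : V) : Prop :=
  [u, v, x, y, z].Nodup ∧ (∀ t : V, t ∈ [u, v, x, y, z]) ∧
    adjSpec W.G [(u, v), (u, x), (x, v), (u, y), (y, z), (z, v)]

/-- `W` is the weighted graph `θ(2,0,2)` on vertices `u, v, x1, x2, y1, y2`
with edges `uv, ux1, x1x2, x2v, uy1, y1y2, y2v`. -/
def Theta202Shape {V : Type*} (W : WeightedGraph V) (u v x1 x2 y1 y2 : V) : Prop :=
  [u, v, x1, x2, y1, y2].Nodup ∧ (∀ t : V, t ∈ [u, v, x1, x2, y1, y2]) ∧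
    adjSpec W.G [(u, v), (u, x1), (x1, x2), (x2, v), (u, y1), (y1, y2), (y2, v)]

/-- `W` is the weighted graph `θ(1,1,2)` on vertices `u, v, x1, x2, y1, y2`
with edges `ux1, x1v, ux2, x2v, uy1, y1y2, y2v`. -/
def Theta112Shape {V : Type*} (W : WeightedGraph V) (u v x1 x2 y1 y2 : V) : Prop :=
  [u, v, x1, x2, y1, y2].Nodup ∧ (∀ t : V, t ∈ [u, v, x1, x2, y1, y2]) ∧
    adjSpec W.G [(u, x1), (x1, v), (u, x2), (x2, v), (u, y1), (y1, y2), (y2, v)]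

/-- `W` is the weighted graph `∞(3,1,3)`: two triangles sharing the vertex `c`. -/
def Inf313Shape {V : Type*} (W : WeightedGraph V) (c a1 a2 b1 b2 : V) : Prop :=
  [c, a1, a2, b1, b2].Nodup ∧ (∀ t : V, t ∈ [c, a1, a2, b1, b2]) ∧
    adjSpec W.G [(c, a1), (a1, a2), (a2, c), (c, b1), (b1, b2), (b2, c)]

/-- `W` is the weighted graph `∞(3,2,3)`: the triangle `u,x,y` and the triangle
`v,s,t`, joined by the edge `uv`. -/
def Inf323Shape {V : Type*} (W : WeightedGraph V) (u v x y s t : V) : Prop :=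
  [u, v, x, y, s, t].Nodup ∧ (∀ z : V, z ∈ [u, v, x, y, s, t]) ∧
    adjSpec W.G [(u, x), (x, y), (y, u), (v, s), (s, t), (t, v), (u, v)]

/-- `W` is the weighted graph `∞(3,1,4)`: the triangle `c,x,y` and the
quadrilateral `c,z1,z2,z3` sharing the vertex `c`. -/
def Inf314Shape {V : Type*} (W : WeightedGraph V) (c x y z1 z2 z3 : V) : Prop :=
  [c, x, y, z1, z2, z3].Nodup ∧ (∀ t : V, t ∈ [c, x, y, z1, z2, z3]) ∧
    adjSpec W.G [(c, x), (x, y), (y, c), (c, z1), (z1, z2), (z2, z3), (z3, c)]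

/-- `W` is the weighted graph `∞(4,1,4)`: the quadrilaterals `c,x1,x2,x3` and
`c,y1,y2,y3` sharing the vertex `c`. -/
def Inf414Shape {V : Type*} (W : WeightedGraph V) (c x1 x2 x3 y1 y2 y3 : V) : Prop :=
  [c, x1, x2, x3, y1, y2, y3].Nodup ∧ (∀ t : V, t ∈ [c, x1, x2, x3, y1, y2, y3]) ∧
    adjSpec W.G [(c, x1), (x1, x2), (x2, x3), (x3, c), (c, y1), (y1, y2), (y2, y3), (y3, c)]

/-!
For a real symmetric matrix, `i₊ ≤ 1` exactly when no plane carries a positive definite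
restriction of the quadratic form, and `i₊ ≥ 1` exactly when the form takes a positive value.
Positive planes pass from principal submatrices to the whole matrix, and two configurations on
four vertices carry one: an edge `xy` together with an edge `cm` such that `c` sees neither `x`
nor `y`, and a four-cycle (with or without a chord) whose two products of opposite weights
differ. So if `i₊ = 1` and the graph is connected, every edge dominates the graph. With `n + 1`
edges this forces a vertex of degree two whose neighbours `a, b` are adjacent to all other
vertices, and counting degrees leaves only `K_{2,3}` and `K_4` minus an edge; their four-cycles
give the weight conditions. Conversely, under the weight conditions the form is nonpositive on
an explicit hyperplane, so `i₊ ≤ 1`.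
-/

def HasPositivePlane {n : Type*} [Fintype n] (A : Matrix n n ℝ) : Prop :=
  ∃ x y : n → ℝ, ∀ a b : ℝ, (a ≠ 0 ∨ b ≠ 0) → 0 < (a • x + b • y) ⬝ᵥ A *ᵥ (a • x + b • y)

lemma not_hasPositivePlane_of_nonpos_on_ker {n : Type*} [Fintype n] {A : Matrix n n ℝ}
    (f : (n → ℝ) →ₗ[ℝ] ℝ) (hf : ∀ z, f z = 0 → z ⬝ᵥ A *ᵥ z ≤ 0) : ¬ HasPositivePlane A := by
  rintro ⟨x, y, hxy⟩
  by_cases h : f x = 0 ∧ f y = 0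
  · have := hxy 1 0 (Or.inl one_ne_zero)
    have := hf ((1 : ℝ) • x + (0 : ℝ) • y) (by simp [h.1])
    linarith
  · have := hxy (f y) (-f x) (by rw [neg_ne_zero]; tauto)
    have := hf (f y • x + (-f x) • y) (by simp [mul_comm])
    linarith

namespace Matrix.IsHermitian

variable {n : Type*} [Fintype n] [DecidableEq n] {A : Matrix n n ℝ}

lemma dotProduct_mulVec_eq_sum_eigenvalues (hA : A.IsHermitian) (z : n → ℝ) :
    z ⬝ᵥ A *ᵥ z =
      ∑ i, hA.eigenvalues i * (star (hA.eigenvectorUnitary : Matrix n n ℝ) *ᵥ z) i ^ 2 := by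
  have hU : z ᵥ* (hA.eigenvectorUnitary : Matrix n n ℝ) =
      star (hA.eigenvectorUnitary : Matrix n n ℝ) *ᵥ z := by
    rw [star_eq_conjTranspose, conjTranspose_eq_transpose_of_trivial, mulVec_transpose]
  conv_lhs => rw [hA.spectral_theorem, Unitary.conjStarAlgAut_apply, ← mulVec_mulVec,
    ← mulVec_mulVec, dotProduct_mulVec, hU]
  simp [dotProduct, mulVec_diagonal, sq, mul_left_comm]

lemma dotProduct_mulVec_nonpos (hA : A.IsHermitian) {z : n → ℝ}
    (hz : ∀ i, 0 < hA.eigenvalues i → (star (hA.eigenvectorUnitary : Matrix n n ℝ) *ᵥ z) i = 0) :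
    z ⬝ᵥ A *ᵥ z ≤ 0 := by
  rw [hA.dotProduct_mulVec_eq_sum_eigenvalues]
  refine Finset.sum_nonpos fun i _ => ?_
  by_cases hi : 0 < hA.eigenvalues i
  · simp [hz i hi]
  · exact mul_nonpos_of_nonpos_of_nonneg (not_lt.1 hi) (sq_nonneg _)

lemma hasPositivePlane_of_eigenvalues_pos (hA : A.IsHermitian) {i j : n} (hij : i ≠ j)
    (hi : 0 < hA.eigenvalues i) (hj : 0 < hA.eigenvalues j) : HasPositivePlane A := by
  refine ⟨hA.eigenvectorBasis i, hA.eigenvectorBasis j, fun a b hab => ?_⟩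
  rw [hA.dotProduct_mulVec_eq_sum_eigenvalues, mulVec_add, mulVec_smul, mulVec_smul,
    star_eigenvectorUnitary_mulVec, star_eigenvectorUnitary_mulVec,
    Fintype.sum_eq_add i j hij (fun k hk => by simp [hk.1, hk.2])]
  simp only [Pi.add_apply, Pi.smul_apply, Pi.single_eq_same, Pi.single_eq_of_ne hij,
    Pi.single_eq_of_ne hij.symm, smul_eq_mul, mul_one, mul_zero, add_zero, zero_add]
  rcases hab with h | h
  · exact add_pos_of_pos_of_nonneg (by positivity) (by positivity)
  · exact add_pos_of_nonneg_of_pos (by positivity) (by positivity)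

lemma posInertia_eq_card (hA : A.IsHermitian) :
    posInertia A = Fintype.card {i // 0 < hA.eigenvalues i} := by
  rw [posInertia, dif_pos hA]

lemma posInertia_pos_iff (hA : A.IsHermitian) : 0 < posInertia A ↔ ∃ z, 0 < z ⬝ᵥ A *ᵥ z := by
  rw [hA.posInertia_eq_card, Fintype.card_pos_iff]
  constructor
  · rintro ⟨i, hi⟩
    refine ⟨hA.eigenvectorBasis i, ?_⟩
    rw [hA.dotProduct_mulVec_eq_sum_eigenvalues, star_eigenvectorUnitary_mulVec]
    simpa [Pi.single_apply, ite_pow] using hi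
  · rintro ⟨z, hz⟩
    by_contra! h
    exact hz.not_ge (hA.dotProduct_mulVec_nonpos fun i hi => (h.false ⟨i, hi⟩).elim)

lemma posInertia_le_one_iff (hA : A.IsHermitian) : posInertia A ≤ 1 ↔ ¬ HasPositivePlane A := by
  rw [hA.posInertia_eq_card, Fintype.card_le_one_iff]
  constructor
  · intro h
    by_cases hpos : ∃ i, 0 < hA.eigenvalues i
    · obtain ⟨i, hi⟩ := hpos
      refine not_hasPositivePlane_of_nonpos_on_ker
        (LinearMap.proj i ∘ₗ mulVecLin (star (hA.eigenvectorUnitary : Matrix n n ℝ)))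
        fun z hz => hA.dotProduct_mulVec_nonpos fun j hj => ?_
      obtain rfl : j = i := congrArg Subtype.val (h ⟨j, hj⟩ ⟨i, hi⟩)
      simpa using hz
    · push Not at hpos
      exact not_hasPositivePlane_of_nonpos_on_ker 0
        fun z _ => hA.dotProduct_mulVec_nonpos fun j hj => ((hpos j).not_gt hj).elim
  · intro h ⟨i, hi⟩ ⟨j, hj⟩
    by_contra hij
    exact h (hA.hasPositivePlane_of_eigenvalues_pos (fun e => hij (Subtype.ext e)) hi hj)

lemma posInertia_eq_one_iff (hA : A.IsHermitian) :
    posInertia A = 1 ↔ (∃ z, 0 < z ⬝ᵥ A *ᵥ z) ∧ ¬ HasPositivePlane A := by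
  rw [← hA.posInertia_pos_iff, ← hA.posInertia_le_one_iff]
  omega

end Matrix.IsHermitian

section Congruence

variable {m n : Type*} [Fintype m] [Fintype n] [DecidableEq n] {A : Matrix n n ℝ}

lemma HasPositivePlane.of_submatrix (p : m → n) (h : HasPositivePlane (A.submatrix p p)) :
    HasPositivePlane A := by
  obtain ⟨x, y, hxy⟩ := h
  set P : Matrix m n ℝ := (1 : Matrix n n ℝ).submatrix p id
  have hP : A.submatrix p p = P * A * Pᵀ := by
    ext k l
    simp [P, mul_apply, one_apply]
  have hqf (z : m → ℝ) : (z ᵥ* P) ⬝ᵥ A *ᵥ (z ᵥ* P) = z ⬝ᵥ A.submatrix p p *ᵥ z := by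
    rw [hP, ← mulVec_mulVec, ← mulVec_mulVec, mulVec_transpose, dotProduct_mulVec z P]
  refine ⟨x ᵥ* P, y ᵥ* P, fun a b hab => ?_⟩
  rw [← smul_vecMul, ← smul_vecMul, ← add_vecMul, hqf]
  exact hxy a b hab

end Congruence

section FourVertices

variable {n : Type*} {A : Matrix n n ℝ}

lemma dotProduct_submatrix_mulVec_fin_four (hA : A.IsSymm) (hd : ∀ i, A i i = 0)
    (p₁ p₂ p₃ p₄ : n) (z₁ z₂ z₃ z₄ : ℝ) :
    ![z₁, z₂, z₃, z₄] ⬝ᵥ A.submatrix ![p₁, p₂, p₃, p₄] ![p₁, p₂, p₃, p₄] *ᵥ ![z₁, z₂, z₃, z₄] =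
      2 * (A p₁ p₂ * z₁ * z₂ + A p₁ p₃ * z₁ * z₃ + A p₁ p₄ * z₁ * z₄ +
        A p₂ p₃ * z₂ * z₃ + A p₂ p₄ * z₂ * z₄ + A p₃ p₄ * z₃ * z₄) := by
  simp [dotProduct, mulVec, Fin.sum_univ_four, hd, hA.apply p₁ p₂, hA.apply p₁ p₃,
    hA.apply p₁ p₄, hA.apply p₂ p₃, hA.apply p₂ p₄, hA.apply p₃ p₄]
  ring

variable [Fintype n] [DecidableEq n]

lemma hasPositivePlane_of_edge_not_dominating (hA : A.IsSymm) (hd : ∀ i, A i i = 0)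
    {c m x y : n} (hcm : A c m ≠ 0) (hxy : 0 < A x y) (hcx : A c x = 0) (hcy : A c y = 0) :
    HasPositivePlane A := by
  set s := A m x + A m y
  refine HasPositivePlane.of_submatrix ![c, m, x, y]
    ⟨![(s ^ 2 + 1) / 2, 2 * A c m * A x y, 0, 0], ![0, 0, 1, 1], fun a b hab => ?_⟩
  simp only [smul_cons, cons_add_cons, smul_eq_mul, smul_empty, empty_add_empty]
  rw [dotProduct_submatrix_mulVec_fin_four hA hd, hcx, hcy]
  have hpos : 0 < (b + s * A c m * a) ^ 2 + (A c m * a) ^ 2 := by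
    rcases eq_or_ne a 0 with rfl | ha
    · simpa [sq_pos_iff] using hab
    · have : 0 < (A c m * a) ^ 2 := by positivity
      positivity
  -- the form equals `2 * A x y * ((b + s * A c m * a) ^ 2 + (A c m * a) ^ 2)`
  nlinarith [mul_pos hxy hpos]

lemma hasPositivePlane_of_four_cycle (hA : A.IsSymm) (hd : ∀ i, A i i = 0) {p₁ p₂ p₃ p₄ : n}
    (h₁₃ : A p₁ p₃ = 0) (hw : A p₁ p₂ * A p₃ p₄ ≠ A p₂ p₃ * A p₁ p₄) : HasPositivePlane A := by
  set δ := A p₂ p₄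
  refine HasPositivePlane.of_submatrix ![p₁, p₂, p₃, p₄]
    ⟨![δ ^ 2 + 1, A p₁ p₂, 0, A p₁ p₄], ![0, A p₂ p₃, δ ^ 2 + 1, A p₃ p₄], fun a b hab => ?_⟩
  simp only [smul_cons, cons_add_cons, smul_eq_mul, smul_empty, empty_add_empty]
  rw [dotProduct_submatrix_mulVec_fin_four hA hd, h₁₃]
  set s := a * A p₁ p₂ + b * A p₂ p₃
  set t := a * A p₁ p₄ + b * A p₃ p₄
  have hst : 0 < s ^ 2 + t ^ 2 := by
    by_contra! h
    have hs : s = 0 := by nlinarith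
    have ht : t = 0 := by nlinarith
    have hdet := sub_ne_zero.2 hw
    have ha : a * (A p₁ p₂ * A p₃ p₄ - A p₂ p₃ * A p₁ p₄) = 0 := by
      linear_combination A p₃ p₄ * hs - A p₂ p₃ * ht
    have hb : b * (A p₁ p₂ * A p₃ p₄ - A p₂ p₃ * A p₁ p₄) = 0 := by
      linear_combination A p₁ p₂ * ht - A p₁ p₄ * hs
    rcases hab with hab | hab
    · exact hab ((mul_eq_zero.1 ha).resolve_right hdet)
    · exact hab ((mul_eq_zero.1 hb).resolve_right hdet)
  -- the form equals `2 * ((δ ^ 2 + 1) * (s ^ 2 + t ^ 2) + δ * s * t)`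
  nlinarith [sq_nonneg (δ * s + t / 2), sq_nonneg s, sq_nonneg t]

end FourVertices

open Finset

lemma exists_pos_dotProduct_mulVec {n : Type*} [Fintype n] [DecidableEq n] {A : Matrix n n ℝ}
    (hA : A.IsSymm) (hd : ∀ i, A i i = 0) {i j : n} (hij : 0 < A i j) :
    ∃ z, 0 < z ⬝ᵥ A *ᵥ z :=
  ⟨Pi.single i 1 + Pi.single j 1, by simpa [mulVec_add, hd, hA.apply i j] using hij⟩

lemma dotProduct_mulVec_eq_list_sum {n : Type*} [Fintype n] [DecidableEq n] (A : Matrix n n ℝ)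
    {L : List n} (hL : L.Nodup) (hcov : ∀ i, i ∈ L) (z : n → ℝ) :
    z ⬝ᵥ A *ᵥ z = (L.map fun i => z i * (L.map fun j => A i j * z j).sum).sum := by
  have hsum (f : n → ℝ) : ∑ i, f i = (L.map f).sum := by
    rw [← List.sum_toFinset f hL]
    exact (sum_subset (subset_univ _) fun i _ hi => absurd (List.mem_toFinset.2 (hcov i)) hi).symm
  simp only [dotProduct, mulVec, hsum]

def SimpleGraph.AllEdgesDominating {V : Type*} (G : SimpleGraph V) : Prop :=
  ∀ ⦃x y⦄, G.Adj x y → ∀ c, G.Adj c x ∨ G.Adj c y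

namespace WeightedGraph

variable {V : Type*} [Fintype V] [DecidableEq V] (W : WeightedGraph V)

open Classical in
lemma adjMatrix_apply (a b : V) : W.adjMatrix a b = if W.G.Adj a b then W.w a b else 0 := rfl

lemma adjMatrix_apply_of_adj {a b : V} (h : W.G.Adj a b) : W.adjMatrix a b = W.w a b := by
  simp [adjMatrix_apply, h]

lemma adjMatrix_apply_of_not_adj {a b : V} (h : ¬ W.G.Adj a b) : W.adjMatrix a b = 0 := by
  simp [adjMatrix_apply, h]

lemma adjMatrix_apply_self (a : V) : W.adjMatrix a a = 0 :=
  W.adjMatrix_apply_of_not_adj (W.G.irrefl)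

lemma isSymm_adjMatrix : W.adjMatrix.IsSymm := by
  ext a b
  rw [transpose_apply, adjMatrix_apply, adjMatrix_apply, W.G.adj_comm, W.symm]

lemma isHermitian_adjMatrix : W.adjMatrix.IsHermitian :=
  isHermitian_iff_isSymm.2 W.isSymm_adjMatrix

lemma exists_pos_dotProduct_adjMatrix_mulVec {a b : V} (h : W.G.Adj a b) :
    ∃ z, 0 < z ⬝ᵥ W.adjMatrix *ᵥ z :=
  exists_pos_dotProduct_mulVec W.isSymm_adjMatrix W.adjMatrix_apply_self
    (by rw [W.adjMatrix_apply_of_adj h]; exact W.pos a b h)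

variable {W}

lemma allEdgesDominating_of_not_hasPositivePlane (hconn : W.G.Connected)
    (h : ¬ HasPositivePlane W.adjMatrix) : W.G.AllEdgesDominating := by
  intro x y hxy c
  by_contra! hc
  have : Nontrivial V := ⟨x, y, hxy.ne⟩
  obtain ⟨m, hcm⟩ := hconn.preconnected.exists_adj_of_nontrivial c
  refine h (hasPositivePlane_of_edge_not_dominating W.isSymm_adjMatrix W.adjMatrix_apply_self
    (m := m) ?_ ?_ (W.adjMatrix_apply_of_not_adj hc.1) (W.adjMatrix_apply_of_not_adj hc.2))
  · rw [W.adjMatrix_apply_of_adj hcm]; exact (W.pos c m hcm).ne'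
  · rw [W.adjMatrix_apply_of_adj hxy]; exact W.pos x y hxy

lemma weight_mul_eq_of_not_hasPositivePlane (h : ¬ HasPositivePlane W.adjMatrix)
    {u v x₁ x₂ : V} (hux₁ : W.G.Adj u x₁) (hux₂ : W.G.Adj u x₂) (hx₁v : W.G.Adj x₁ v)
    (hx₂v : W.G.Adj x₂ v) (hx₁x₂ : ¬ W.G.Adj x₁ x₂) :
    W.w u x₁ * W.w x₂ v = W.w u x₂ * W.w x₁ v := by
  by_contra hw
  refine h (hasPositivePlane_of_four_cycle W.isSymm_adjMatrix W.adjMatrix_apply_self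
    (p₂ := u) (p₄ := v) (W.adjMatrix_apply_of_not_adj hx₁x₂) ?_)
  rwa [W.adjMatrix_apply_of_adj hux₁.symm, W.adjMatrix_apply_of_adj hux₂,
    W.adjMatrix_apply_of_adj hx₂v, W.adjMatrix_apply_of_adj hx₁v, W.symm x₁ u]

end WeightedGraph


namespace SimpleGraph

variable {V : Type*} [Fintype V] {G : SimpleGraph V} [DecidableRel G.Adj]

lemma exists_degree_le_two (hE : #G.edgeFinset = Fintype.card V + 1) :
    ∃ v, G.degree v ≤ 2 := by
  by_contra! hdeg
  have hsum : 3 * Fintype.card V ≤ 2 * #G.edgeFinset := by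
    rw [← G.sum_degrees_eq_twice_card_edges]
    simpa [mul_comm] using Finset.sum_le_sum fun v (_ : v ∈ univ) => Nat.succ_le_of_lt (hdeg v)
  have hchoose := G.card_edgeFinset_le_card_choose_two
  have hV : Fintype.card V ≤ 2 := by omega
  interval_cases h : Fintype.card V <;> simp_all

variable [DecidableEq V]

lemma degree_eq_of_forall_adj {a b : V} (hab : a ≠ b) (h : ∀ s, s ≠ a → s ≠ b → G.Adj a s) :
    G.degree a = Fintype.card V - 2 + if G.Adj a b then 1 else 0 := by
  rw [← card_neighborFinset_eq_degree, neighborFinset_eq_filter,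
    ← sdiff_union_of_subset (subset_univ {a, b}), filter_union,
    card_union_of_disjoint (disjoint_filter_filter sdiff_disjoint),
    filter_true_of_mem fun s hs => by
      simp only [mem_sdiff, mem_univ, mem_insert, mem_singleton, not_or, true_and] at hs
      exact h s hs.1 hs.2,
    card_sdiff_of_subset (subset_univ _), card_pair hab, card_univ]
  simp [filter_insert, filter_singleton, apply_ite]

lemma card_eq_of_forall_adj {a b : V} (hE : #G.edgeFinset = Fintype.card V + 1) (hab : a ≠ b)
    (hcomm : ∀ s, s ≠ a → s ≠ b → G.Adj a s ∧ G.Adj b s)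
    (hind : ∀ s t, G.Adj s t → s = a ∨ s = b ∨ t = a ∨ t = b) :
    (¬ G.Adj a b ∧ Fintype.card V = 5) ∨ (G.Adj a b ∧ Fintype.card V = 4) := by
  have hdeg2 : ∀ s ∈ univ \ {a, b}, G.degree s = 2 := by
    intro s hs
    simp only [mem_sdiff, mem_univ, mem_insert, mem_singleton, true_and, not_or] at hs
    rw [← card_neighborFinset_eq_degree, ← card_pair hab]
    congr 1
    ext t
    simp only [mem_neighborFinset, mem_insert, mem_singleton]
    refine ⟨fun hst => ?_, ?_⟩
    · have := hind s t hst
      tauto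
    · rintro (rfl | rfl)
      exacts [(hcomm s hs.1 hs.2).1.symm, (hcomm s hs.1 hs.2).2.symm]
  have hsum := G.sum_degrees_eq_twice_card_edges
  rw [← sum_sdiff (subset_univ {a, b}), sum_congr rfl hdeg2, sum_pair hab,
    degree_eq_of_forall_adj hab fun s hsa hsb => (hcomm s hsa hsb).1,
    degree_eq_of_forall_adj hab.symm fun s hsb hsa => (hcomm s hsa hsb).2, sum_const,
    card_sdiff_of_subset (subset_univ _), card_pair hab, card_univ, hE] at hsum
  have : 2 ≤ Fintype.card V := by simpa [card_pair hab] using card_le_univ {a, b}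
  simp only [G.adj_comm b a, smul_eq_mul] at hsum
  split_ifs at hsum with h
  exacts [Or.inr ⟨h, by omega⟩, Or.inl ⟨h, by omega⟩]

namespace AllEdgesDominating

lemma card_edgeFinset_le_sum_degree (h : G.AllEdgesDominating) (v : V) :
    #G.edgeFinset ≤ ∑ t ∈ G.neighborFinset v, G.degree t := by
  calc #G.edgeFinset ≤ #((G.neighborFinset v).biUnion fun t => G.incidenceFinset t) := by
        refine card_le_card fun e he => ?_
        induction e using Sym2.ind with
        | h x y =>
          rw [mem_edgeFinset, mem_edgeSet] at he
          rw [mem_biUnion]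
          rcases h he v with hx | hy
          · exact ⟨x, by simpa using hx, by simp [incidenceSet, he]⟩
          · exact ⟨y, by simpa using hy, by simp [incidenceSet, he]⟩
    _ ≤ ∑ t ∈ G.neighborFinset v, #(G.incidenceFinset t) := card_biUnion_le
    _ = ∑ t ∈ G.neighborFinset v, G.degree t := by simp [card_incidenceFinset_eq_degree]

lemma exists_dominating_pair (h : G.AllEdgesDominating) (hE : #G.edgeFinset = Fintype.card V + 1) :
    ∃ a b, a ≠ b ∧ (∀ s, s ≠ a → s ≠ b → G.Adj a s ∧ G.Adj b s) ∧
      ∀ s t, G.Adj s t → s = a ∨ s = b ∨ t = a ∨ t = b := by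
  obtain ⟨v, hv⟩ := exists_degree_le_two hE
  have hv2 : G.degree v = 2 := by
    by_contra hne
    have hsum : ∑ t ∈ G.neighborFinset v, G.degree t ≤ G.degree v * (Fintype.card V - 1) := by
      rw [← card_neighborFinset_eq_degree, ← smul_eq_mul]
      exact sum_le_card_nsmul _ _ _ fun t _ => Nat.le_sub_one_of_lt (G.degree_lt_card_verts t)
    have := h.card_edgeFinset_le_sum_degree v
    have : G.degree v * (Fintype.card V - 1) ≤ 1 * (Fintype.card V - 1) :=
      Nat.mul_le_mul_right _ (by omega)
    omega
  obtain ⟨a, b, hab, hN⟩ := card_eq_two.1 hv2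
  have hadj (t : V) : G.Adj v t ↔ t = a ∨ t = b := by simp [← mem_neighborFinset, hN]
  refine ⟨a, b, hab, fun s hsa hsb => ?_, fun s t hst => ?_⟩
  · have hvs : ¬ G.Adj s v := fun hsv => by grind [hadj s, hsv.symm]
    exact ⟨((h ((hadj a).2 (Or.inl rfl)) s).resolve_left hvs).symm,
      ((h ((hadj b).2 (Or.inr rfl)) s).resolve_left hvs).symm⟩
  · grind [h hst v, hadj s, hadj t]

theorem exists_pair_adj_iff (h : G.AllEdgesDominating) (hE : #G.edgeFinset = Fintype.card V + 1) :
    ∃ a b, a ≠ b ∧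
      ((Fintype.card V = 5 ∧ ∀ x y, G.Adj x y ↔ ((x = a ∨ x = b) ↔ ¬(y = a ∨ y = b))) ∨
        (Fintype.card V = 4 ∧ ∀ x y, G.Adj x y ↔ x ≠ y ∧ (x = a ∨ x = b ∨ y = a ∨ y = b))) := by
  obtain ⟨a, b, hab, hcomm, hind⟩ := h.exists_dominating_pair hE
  refine ⟨a, b, hab, ?_⟩
  rcases card_eq_of_forall_adj hE hab hcomm hind with ⟨hnab, hcard⟩ | ⟨hab', hcard⟩
  · refine Or.inl ⟨hcard, fun x y => ?_⟩
    grind [hcomm x, hcomm y, hind x y, G.adj_comm, G.irrefl]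
  · refine Or.inr ⟨hcard, fun x y => ?_⟩
    grind [hcomm x, hcomm y, hind x y, G.adj_comm, G.ne_of_adj]

end AllEdgesDominating

end SimpleGraph

namespace WeightedGraph

variable {V : Type*} [Fintype V] [DecidableEq V] (W : WeightedGraph V)

lemma exists_theta111Shape {a b : V} (hab : a ≠ b) (hcard : Fintype.card V = 5)
    (hadj : ∀ x y, W.G.Adj x y ↔ ((x = a ∨ x = b) ↔ ¬(y = a ∨ y = b))) :
    ∃ c₁ c₂ c₃, Theta111Shape W a b c₁ c₂ c₃ := by
  have hT : #(univ \ {a, b}) = 3 := by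
    rw [card_sdiff_of_subset (subset_univ _), card_pair hab, card_univ, hcard]
  obtain ⟨c₁, c₂, c₃, h₁₂, h₁₃, h₂₃, hT⟩ := card_eq_three.1 hT
  have hmem (z : V) : z ≠ a ∧ z ≠ b ↔ z = c₁ ∨ z = c₂ ∨ z = c₃ := by
    simpa using congrArg (z ∈ ·) hT
  refine ⟨c₁, c₂, c₃, ?_, fun z => ?_, fun x y => ?_⟩
  · simp only [List.nodup_cons, List.mem_cons, List.not_mem_nil, or_false, List.nodup_nil]
    grind [hmem c₁, hmem c₂, hmem c₃]
  · simp only [List.mem_cons, List.not_mem_nil, or_false]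
    grind [hmem z]
  · simp only [hadj, List.mem_cons, List.not_mem_nil, Prod.mk.injEq, or_false]
    grind [hmem x, hmem y]

lemma exists_theta101Shape {a b : V} (hab : a ≠ b) (hcard : Fintype.card V = 4)
    (hadj : ∀ x y, W.G.Adj x y ↔ x ≠ y ∧ (x = a ∨ x = b ∨ y = a ∨ y = b)) :
    ∃ c₁ c₂, Theta101Shape W a b c₁ c₂ := by
  have hT : #(univ \ {a, b}) = 2 := by
    rw [card_sdiff_of_subset (subset_univ _), card_pair hab, card_univ, hcard]
  obtain ⟨c₁, c₂, h₁₂, hT⟩ := card_eq_two.1 hT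
  have hmem (z : V) : z ≠ a ∧ z ≠ b ↔ z = c₁ ∨ z = c₂ := by
    simpa using congrArg (z ∈ ·) hT
  refine ⟨c₁, c₂, ?_, fun z => ?_, fun x y => ?_⟩
  · simp only [List.nodup_cons, List.mem_cons, List.not_mem_nil, or_false, List.nodup_nil]
    grind [hmem c₁, hmem c₂]
  · simp only [List.mem_cons, List.not_mem_nil, or_false]
    grind [hmem z]
  · simp only [hadj, List.mem_cons, List.not_mem_nil, Prod.mk.injEq, or_false]
    grind [hmem x, hmem y]

lemma exists_shape_of_not_hasPositivePlane (hbic : W.IsBicyclic)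
    (h : ¬ HasPositivePlane W.adjMatrix) :
    (∃ u v x₁ x₂ x₃, Theta111Shape W u v x₁ x₂ x₃) ∨ ∃ u v x₁ x₂, Theta101Shape W u v x₁ x₂ := by
  classical
  obtain ⟨hconn, hcard⟩ := hbic
  have hE : #W.G.edgeFinset = Fintype.card V + 1 := by
    rwa [← SimpleGraph.coe_edgeFinset, Set.ncard_coe_finset] at hcard
  obtain ⟨a, b, hab, ⟨h5, hadj⟩ | ⟨h4, hadj⟩⟩ :=
    (W.allEdgesDominating_of_not_hasPositivePlane hconn h).exists_pair_adj_iff hE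
  exacts [Or.inl ⟨a, b, W.exists_theta111Shape hab h5 hadj⟩,
    Or.inr ⟨a, b, W.exists_theta101Shape hab h4 hadj⟩]

end WeightedGraph

section Shapes

variable {V : Type*} [Fintype V] [DecidableEq V] {W : WeightedGraph V}

lemma Theta101Shape.not_hasPositivePlane_iff {u v x₁ x₂ : V} (hsh : Theta101Shape W u v x₁ x₂) :
    ¬ HasPositivePlane W.adjMatrix ↔ W.w u x₁ * W.w x₂ v = W.w u x₂ * W.w x₁ v := by
  obtain ⟨hnd, hcov, hadj⟩ := hsh
  have hL := hnd
  simp only [List.nodup_cons, List.mem_cons, List.not_mem_nil, or_false, List.nodup_nil,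
    not_or] at hnd
  obtain ⟨⟨huv, hux₁, hux₂⟩, ⟨hvx₁, hvx₂⟩, hx₁₂, -⟩ := hnd
  unfold adjSpec at hadj
  constructor
  · intro h
    exact W.weight_mul_eq_of_not_hasPositivePlane h ((hadj _ _).2 (by simp))
      ((hadj _ _).2 (by simp)) ((hadj _ _).2 (by simp)) ((hadj _ _).2 (by simp))
      (by simp only [hadj, List.mem_cons, Prod.mk.injEq, List.not_mem_nil, or_false]; grind)
  · intro hw
    have huv' : 0 < W.w u v := W.pos _ _ ((hadj _ _).2 (by simp))
    have hux₁' : 0 < W.w u x₁ := W.pos _ _ ((hadj _ _).2 (by simp))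
    have hx₁v' : 0 < W.w x₁ v := W.pos _ _ ((hadj _ _).2 (by simp))
    refine not_hasPositivePlane_of_nonpos_on_ker
      (W.w u x₁ • LinearMap.proj u + W.w x₁ v • LinearMap.proj v) fun z hz => ?_
    simp only [LinearMap.add_apply, LinearMap.smul_apply, LinearMap.proj_apply, smul_eq_mul] at hz
    rw [dotProduct_mulVec_eq_list_sum _ hL hcov]
    simp only [WeightedGraph.adjMatrix_apply, hadj, List.mem_cons, Prod.mk.injEq, List.not_mem_nil,
      List.map_cons, List.map_nil, List.sum_cons, List.sum_nil, huv, hux₁, hux₂, hvx₁, hvx₂, hx₁₂,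
      Ne.symm huv, Ne.symm hux₁, Ne.symm hux₂, Ne.symm hvx₁, Ne.symm hvx₂, Ne.symm hx₁₂, and_true,
      true_and, and_false, false_and, or_true, or_false, false_or, or_self, ↓reduceIte, ite_mul,
      zero_mul, add_zero, zero_add]
    rw [W.symm v u, W.symm x₁ u, W.symm x₂ u, W.symm v x₁, W.symm v x₂,
      ← mul_le_mul_iff_of_pos_right hx₁v', zero_mul]
    -- times `W.w x₁ v`, the form restricted to the kernel is `-2 w(uv) w(ux₁) (z u)²`
    linear_combination (2 * W.w u v * z u + 2 * W.w x₁ v * z x₁ + 2 * W.w x₂ v * z x₂) * hz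
      - 2 * z x₂ * z u * hw + (2 * W.w u v * W.w u x₁) * sq_nonneg (z u)

lemma Theta111Shape.not_hasPositivePlane_iff {u v x₁ x₂ x₃ : V}
    (hsh : Theta111Shape W u v x₁ x₂ x₃) :
    ¬ HasPositivePlane W.adjMatrix ↔
      W.w u x₁ * W.w x₂ v = W.w u x₂ * W.w x₁ v ∧ W.w u x₁ * W.w x₃ v = W.w u x₃ * W.w x₁ v := by
  obtain ⟨hnd, hcov, hadj⟩ := hsh
  have hL := hnd
  simp only [List.nodup_cons, List.mem_cons, List.not_mem_nil, or_false, List.nodup_nil,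
    not_or] at hnd
  obtain ⟨⟨huv, hux₁, hux₂, hux₃⟩, ⟨hvx₁, hvx₂, hvx₃⟩, ⟨hx₁₂, hx₁₃⟩, hx₂₃, -⟩ := hnd
  unfold adjSpec at hadj
  constructor
  · intro h
    exact ⟨W.weight_mul_eq_of_not_hasPositivePlane h ((hadj _ _).2 (by simp))
        ((hadj _ _).2 (by simp)) ((hadj _ _).2 (by simp)) ((hadj _ _).2 (by simp))
        (by simp only [hadj, List.mem_cons, Prod.mk.injEq, List.not_mem_nil, or_false]; grind),
      W.weight_mul_eq_of_not_hasPositivePlane h ((hadj _ _).2 (by simp))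
        ((hadj _ _).2 (by simp)) ((hadj _ _).2 (by simp)) ((hadj _ _).2 (by simp))
        (by simp only [hadj, List.mem_cons, Prod.mk.injEq, List.not_mem_nil, or_false]; grind)⟩
  · rintro ⟨hw₂, hw₃⟩
    have hux₁' : 0 < W.w u x₁ := W.pos _ _ ((hadj _ _).2 (by simp))
    refine not_hasPositivePlane_of_nonpos_on_ker (W.w u x₁ • LinearMap.proj x₁ +
      W.w u x₂ • LinearMap.proj x₂ + W.w u x₃ • LinearMap.proj x₃) fun z hz => ?_
    simp only [LinearMap.add_apply, LinearMap.smul_apply, LinearMap.proj_apply, smul_eq_mul] at hz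
    rw [dotProduct_mulVec_eq_list_sum _ hL hcov]
    simp only [WeightedGraph.adjMatrix_apply, hadj, List.mem_cons, Prod.mk.injEq, List.not_mem_nil,
      List.map_cons, List.map_nil, List.sum_cons, List.sum_nil, huv, hux₁, hux₂, hux₃, hvx₁, hvx₂,
      hvx₃, hx₁₂, hx₁₃, hx₂₃, Ne.symm huv, Ne.symm hux₁, Ne.symm hux₂, Ne.symm hux₃, Ne.symm hvx₁,
      Ne.symm hvx₂, Ne.symm hvx₃, Ne.symm hx₁₂, Ne.symm hx₁₃, Ne.symm hx₂₃, and_true, true_and,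
      and_false, false_and, or_true, or_false, false_or, or_self, ↓reduceIte, ite_mul, zero_mul,
      add_zero, zero_add]
    rw [W.symm x₁ u, W.symm x₂ u, W.symm x₃ u, W.symm v x₁, W.symm v x₂, W.symm v x₃,
      ← mul_le_mul_iff_of_pos_right hux₁', zero_mul]
    -- the rows of `u` and `v` are proportional, so the form vanishes on the kernel
    linear_combination (2 * W.w u x₁ * z u + 2 * W.w x₁ v * z v) * hz
      + 2 * z v * z x₂ * hw₂ + 2 * z v * z x₃ * hw₃

end Shapes

/-- the weighted bicyclic graphs with exactly one positive
eigenvalue. -/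
theorem stmt7 {V : Type*} [Fintype V] [DecidableEq V] (W : WeightedGraph V)
    (hbic : W.IsBicyclic) :
    W.iPos = 1 ↔
      ((∃ u v x1 x2 x3 : V, Theta111Shape W u v x1 x2 x3 ∧
          W.w u x1 * W.w x2 v = W.w u x2 * W.w x1 v ∧
          W.w u x1 * W.w x3 v = W.w u x3 * W.w x1 v) ∨
       (∃ u v x1 x2 : V, Theta101Shape W u v x1 x2 ∧
          W.w u x1 * W.w x2 v = W.w u x2 * W.w x1 v)) := by
  rw [WeightedGraph.iPos, W.isHermitian_adjMatrix.posInertia_eq_one_iff]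
  constructor
  · rintro ⟨-, h⟩
    rcases W.exists_shape_of_not_hasPositivePlane hbic h with
      ⟨u, v, x₁, x₂, x₃, hsh⟩ | ⟨u, v, x₁, x₂, hsh⟩
    · exact Or.inl ⟨u, v, x₁, x₂, x₃, hsh, hsh.not_hasPositivePlane_iff.1 h⟩
    · exact Or.inr ⟨u, v, x₁, x₂, hsh, hsh.not_hasPositivePlane_iff.1 h⟩
  · rintro (⟨u, v, x₁, x₂, x₃, hsh, hw⟩ | ⟨u, v, x₁, x₂, hsh, hw⟩)
    · exact ⟨W.exists_pos_dotProduct_adjMatrix_mulVec ((hsh.2.2 u x₁).2 (by simp)),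
        hsh.not_hasPositivePlane_iff.2 hw⟩
    · exact ⟨W.exists_pos_dotProduct_adjMatrix_mulVec ((hsh.2.2 u v).2 (by simp)),
        hsh.not_hasPositivePlane_iff.2 hw⟩
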